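/- The function Z(x,y,t) = (x−2)(−t² + 2t(x+y) + (3x−y)(x+y)) / (8 y t (t−x−y)(t+x−y)(t−3x+y)) at x = 3 has a critical point at y = t = (9/16)(−1+√33), and (2π)³ times its value there equals (59 + 11√33)π³/486. -/

import Mathlib

/-!
On the diagonal `y = t` of the slice `x = 3`, the numerator and the denominator of `Z` both have
differential proportional to `dy + dt` (with factors `6` and `-216 s (s - 3)`), so by the quotient
rule `dZ` vanishes at `(s, s)` as soon as `216 s (8 s² + 9 s - 81) = 0`; `c` is the positive root
of this quadratic. The value follows by substituting `√33 = (16 c + 9) / 9` and reducing modulo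
the quadratic.
-/

open Real

theorem HasFDerivAt.div {𝕜 E : Type*} [NontriviallyNormedField 𝕜] [NormedAddCommGroup E]
    [NormedSpace 𝕜 E] {f g : E → 𝕜} {f' g' : E →L[𝕜] 𝕜} {x : E}
    (hf : HasFDerivAt f f' x) (hg : HasFDerivAt g g' x) (hx : g x ≠ 0) :
    HasFDerivAt (fun y => f y / g y) ((g x ^ 2)⁻¹ • (g x • f' - f x • g')) x := by
  have hinv : HasFDerivAt (fun y => (g y)⁻¹) (-(g x ^ 2)⁻¹ • g') x :=
    ((hasFDerivAt_inv hx).comp x hg).congr_fderiv (by ext v; simp [mul_comm])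
  simp_rw [div_eq_mul_inv]
  refine (hf.fun_mul hinv).congr_fderiv ?_
  ext v
  simp only [add_apply, smul_apply, smul_eq_mul, neg_mul, mul_neg, sub_apply]
  field_simp
  ring

open ContinuousLinearMap

/-- With `p = (y, t)`, `Z 3 y t = dP2Numerator p / dP2Denominator p`. -/
def dP2Numerator (p : ℝ × ℝ) : ℝ := -p.2 ^ 2 + 2 * p.2 * (3 + p.1) + (9 - p.1) * (3 + p.1)

def dP2Denominator (p : ℝ × ℝ) : ℝ :=
  8 * p.1 * p.2 * (p.2 - 3 - p.1) * (p.2 + 3 - p.1) * (p.2 - 9 + p.1)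

theorem hasFDerivAt_dP2Numerator_diag (s : ℝ) :
    HasFDerivAt dP2Numerator ((6 : ℝ) • (fst ℝ ℝ ℝ + snd ℝ ℝ ℝ)) (s, s) := by
  have hy : HasFDerivAt (fun p : ℝ × ℝ => p.1) (fst ℝ ℝ ℝ) (s, s) := hasFDerivAt_fst
  have ht : HasFDerivAt (fun p : ℝ × ℝ => p.2) (snd ℝ ℝ ℝ) (s, s) := hasFDerivAt_snd
  refine ((((ht.pow 2).fun_neg.fun_add ((ht.const_mul 2).fun_mul (hy.const_add 3))).fun_add
    ((hy.const_sub 9).fun_mul (hy.const_add 3)))).congr_fderiv ?_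
  ext <;> simp <;> ring

theorem hasFDerivAt_dP2Denominator_diag (s : ℝ) :
    HasFDerivAt dP2Denominator ((-216 * s * (s - 3)) • (fst ℝ ℝ ℝ + snd ℝ ℝ ℝ)) (s, s) := by
  have hy : HasFDerivAt (fun p : ℝ × ℝ => p.1) (fst ℝ ℝ ℝ) (s, s) := hasFDerivAt_fst
  have ht : HasFDerivAt (fun p : ℝ × ℝ => p.2) (snd ℝ ℝ ℝ) (s, s) := hasFDerivAt_snd
  refine ((((hy.const_mul 8).fun_mul ht).fun_mul ((ht.sub_const 3).fun_sub hy)).fun_mul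
    ((ht.add_const 3).fun_sub hy)).fun_mul ((ht.sub_const 9).fun_add hy) |>.congr_fderiv ?_
  ext <;> simp <;> ring

theorem dP2Numerator_diag (s : ℝ) : dP2Numerator (s, s) = 12 * s + 27 := by
  simp only [dP2Numerator]; ring

theorem dP2Denominator_diag (s : ℝ) : dP2Denominator (s, s) = -72 * s ^ 2 * (2 * s - 9) := by
  simp only [dP2Denominator]; ring

theorem hasFDerivAt_dP2Numerator_div_dP2Denominator_diag {s : ℝ}
    (hs : 8 * s ^ 2 + 9 * s - 81 = 0) :
    HasFDerivAt (fun p => dP2Numerator p / dP2Denominator p) (0 : ℝ × ℝ →L[ℝ] ℝ) (s, s) := by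
  have hs0 : s ≠ 0 := by rintro rfl; norm_num at hs
  have hs9 : 2 * s - 9 ≠ 0 := fun h => by nlinarith
  have hden : dP2Denominator (s, s) ≠ 0 := by rw [dP2Denominator_diag]; positivity
  refine ((hasFDerivAt_dP2Numerator_diag s).div (hasFDerivAt_dP2Denominator_diag s)
    hden).congr_fderiv ?_
  rw [dP2Numerator_diag, dP2Denominator_diag, smul_smul, smul_smul, ← sub_smul,
    show -72 * s ^ 2 * (2 * s - 9) * 6 - (12 * s + 27) * (-216 * s * (s - 3))
      = 216 * s * (8 * s ^ 2 + 9 * s - 81) by ring, hs, mul_zero, zero_smul, smul_zero]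

theorem dP2_critical_quadratic {c : ℝ} (hc : c = 9 / 16 * (-1 + √33)) :
    8 * c ^ 2 + 9 * c - 81 = 0 := by
  have h33 : √33 ^ 2 = 33 := Real.sq_sqrt (by norm_num)
  rw [hc]; linear_combination (81 / 32) * h33

theorem dP2_volume_at_critical {c : ℝ} (hc : c = 9 / 16 * (-1 + √33)) :
    (2 * π) ^ 3 * ((12 * c + 27) / (-72 * c ^ 2 * (2 * c - 9))) =
      (59 + 11 * √33) * π ^ 3 / 486 := by
  have hq := dP2_critical_quadratic hc
  have hs : √33 = (16 * c + 9) / 9 := by rw [hc]; ring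
  have hc0 : c ≠ 0 := by rintro rfl; norm_num at hq
  have hc9 : 2 * c - 9 ≠ 0 := fun h => by nlinarith
  rw [hs]
  field_simp
  linear_combination (-3168 * c ^ 2 + 6480 * c + 11664) * hq

/-- The Martelli–Sparks–Yau Z-function for del Pezzo 2,
`Z(x,y,t) = (x-2)(-t² + 2t(x+y) + (3x-y)(x+y)) / (8yt(t-x-y)(t+x-y)(t-3x+y))`, restricted
to `x = 3`, has a critical point at `y = t = (9/16)(-1+√33)`, and `(2π)³` times its value
there equals `(59 + 11√33)π³/486`. -/
theorem dP2_volume_minimization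
    (Z : ℝ → ℝ → ℝ → ℝ)
    (hZ : Z = fun x y t =>
      (x - 2) * (-t ^ 2 + 2 * t * (x + y) + (3 * x - y) * (x + y)) /
        (8 * y * t * (t - x - y) * (t + x - y) * (t - 3 * x + y)))
    (c : ℝ) (hc : c = (9 / 16) * (-1 + sqrt 33)) :
    fderiv ℝ (fun p : ℝ × ℝ => Z 3 p.1 p.2) (c, c) = 0 ∧
      (2 * π) ^ 3 * Z 3 c c = (59 + 11 * sqrt 33) * π ^ 3 / 486 := by
  have hZ3 : (fun p : ℝ × ℝ => Z 3 p.1 p.2) = fun p => dP2Numerator p / dP2Denominator p := by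
    funext p; simp only [hZ, dP2Numerator, dP2Denominator]; ring_nf
  refine ⟨?_, ?_⟩
  · rw [hZ3]
    exact (hasFDerivAt_dP2Numerator_div_dP2Denominator_diag (dP2_critical_quadratic hc)).fderiv
  · have hZcc := congr_fun hZ3 (c, c)
    simp only at hZcc
    rw [hZcc, dP2Numerator_diag, dP2Denominator_diag]
    exact dP2_volume_at_critical hc
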